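/- Let F be a finite abelian group with |F| ≥ 3. Then λ(F) ≤ (1/|F|) log(|F| − 1), where λ denotes the Lehmer constant. -/

import Mathlib

open Finset

/-- `f` is a finite integer-coefficient linear combination of characters of the
(discrete) abelian group `G`. -/
def IsAddCharComb (G : Type*) [AddCommGroup G] (f : G → ℂ) : Prop :=
  ∃ (s : Finset (AddChar G Circle)) (c : AddChar G Circle → ℤ),
    f = fun x => ∑ χ ∈ s, (c χ : ℂ) * (χ x : ℂ)

/-- The logarithmic Mahler measure of `f` over a finite group, computed with respect to
the normalized (uniform) Haar probability measure. -/
noncomputable def logMahler {G : Type*} [Fintype G] (f : G → ℂ) : ℝ :=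
  (1 / (Fintype.card G : ℝ)) * ∑ x, Real.log (‖f x‖)

/-- The Lehmer constant of a finite abelian group. -/
noncomputable def lehmer (G : Type*) [AddCommGroup G] [Fintype G] : ℝ :=
  sInf {r : ℝ | ∃ f : G → ℂ, IsAddCharComb G f ∧ logMahler f = r ∧ 0 < r}

lemma lehmer_le_logMahler {G : Type*} [AddCommGroup G] [Fintype G] {f : G → ℂ}
    (hf : IsAddCharComb G f) (hpos : 0 < logMahler f) : lehmer G ≤ logMahler f :=
  csInf_le ⟨0, fun _ ⟨_, _, _, hr⟩ => hr.le⟩ ⟨f, hf, rfl, hpos⟩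

lemma logMahler_eq_of_norm_eq_one_of_ne_zero {G : Type*} [Zero G] [Fintype G] {f : G → ℂ}
    (hf : ∀ x ≠ 0, ‖f x‖ = 1) :
    logMahler f = (1 / (Fintype.card G : ℝ)) * Real.log ‖f 0‖ := by
  rw [logMahler, Fintype.sum_eq_single 0 fun x hx => by rw [hf x hx, Real.log_one]]

namespace AddChar

variable {G : Type*} [AddCommGroup G]

noncomputable instance [Finite G] : Fintype (AddChar G Circle) :=
  Fintype.ofEquiv _ circleEquivComplex.symm.toEquiv

variable [Fintype G] [DecidableEq G]

lemma sum_circle_apply_eq_ite (a : G) :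
    ∑ ψ : AddChar G Circle, (ψ a : ℂ) = if a = 0 then (Fintype.card G : ℂ) else 0 := by
  rw [← sum_apply_eq_ite]
  exact circleEquivComplex.toEquiv.sum_comp fun ψ => ψ a

lemma sum_circle_ne_one_apply_eq_ite (a : G) :
    ∑ ψ ∈ univ.erase (1 : AddChar G Circle), (ψ a : ℂ) =
      (if a = 0 then (Fintype.card G : ℂ) else 0) - 1 := by
  rw [← sum_circle_apply_eq_ite, ← sum_erase_add _ _ (mem_univ 1), one_apply, Circle.coe_one,
    add_sub_cancel_right]

end AddChar

/-- The witness is the sum of all nontrivial characters, which equals `|F| • δ₀ - 1`: its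
modulus is `|F| - 1` at `0` and `1` everywhere else. -/
theorem lehmer_le_of_three_le_card (F : Type*) [AddCommGroup F] [Fintype F]
    (hF : 3 ≤ Fintype.card F) :
    lehmer F ≤ (1 / (Fintype.card F : ℝ)) * Real.log ((Fintype.card F : ℝ) - 1) := by
  classical
  have hcard : (3 : ℝ) ≤ Fintype.card F := by exact_mod_cast hF
  let f : F → ℂ := fun x => ∑ ψ ∈ univ.erase (1 : AddChar F Circle), ((1 : ℤ) : ℂ) * ψ x
  have hf : IsAddCharComb F f := ⟨_, fun _ => 1, rfl⟩
  have hf_apply (x : F) : f x = (if x = 0 then (Fintype.card F : ℂ) else 0) - 1 := by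
    simp only [f, Int.cast_one, one_mul, AddChar.sum_circle_ne_one_apply_eq_ite]
  have hf_zero : ‖f 0‖ = Fintype.card F - 1 := by
    rw [hf_apply, if_pos rfl, ← Complex.ofReal_natCast, ← Complex.ofReal_one, ← Complex.ofReal_sub,
      Complex.norm_real, Real.norm_of_nonneg (by linarith)]
  have hf_ne_zero (x : F) (hx : x ≠ 0) : ‖f x‖ = 1 := by
    rw [hf_apply, if_neg hx, zero_sub, norm_neg, norm_one]
  have hm : logMahler f = (1 / (Fintype.card F : ℝ)) * Real.log ((Fintype.card F : ℝ) - 1) := by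
    rw [logMahler_eq_of_norm_eq_one_of_ne_zero hf_ne_zero, hf_zero]
  rw [← hm]
  exact lehmer_le_logMahler hf (hm ▸ mul_pos (by positivity) (Real.log_pos (by linarith)))
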